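/- arXiv:2308.07696 — 2 statements merged into one kernel-verified Lean document; each statement's English description precedes it below -/
import Mathlib

section
/- Let c = c^cr = 1/(4 log 2). There exists N₀ such that for every integer N ≥ N₀ and all vertices u, v ∈ V_N, the two-step transition probability satisfies P²(u,v) = Σ_{x ∈ V_N} P(u,x)·P(x,v) ≥ (c/2)·(1/N²). -/
open scoped BigOperators

/-- Vertices of the discrete 2-dimensional torus. -/
abbrev Vtx (N : ℕ) : Type := ZMod N × ZMod N

/-- `ρ_N(i)`: for a residue represented in `{0,…,N−1}`, `ρ_N(i) = i` if `i ≤ N/2`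
and `ρ_N(i) = N − i` otherwise. -/
def rhoN (N : ℕ) (i : ZMod N) : ℕ :=
  if 2 * i.val ≤ N then i.val else N - i.val

/-- Torus distance `ρ(u,v) = ρ_N(u₁ − v₁) + ρ_N(u₂ − v₂)`. -/
def torusDist (N : ℕ) (u v : Vtx N) : ℕ :=
  rhoN N (u.1 - v.1) + rhoN N (u.2 - v.2)

/-- Connection probability `p(u,v) = min(c/(N·ρ(u,v)), 1)` for `u ≠ v`, `p(u,u) = 0`. -/
noncomputable def edgeProb (N : ℕ) (c : ℝ) (u v : Vtx N) : ℝ :=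
  if u = v then 0 else min (c / ((N : ℝ) * (torusDist N u v : ℝ))) 1

/-- The critical value `c^cr = 1/(4 log 2)`. -/
noncomputable def ccr : ℝ := 1 / (4 * Real.log 2)

/-- Transition matrix `P(u,v) = p(u,v)/Z_N` for `u ≠ v`, `P(u,u) = 0`, where
`Z_N = Σ_{w ≠ u} p(u,w)` (this holds automatically since `p(u,u) = 0`). -/
noncomputable def transP (N : ℕ) [NeZero N] (c : ℝ) (u v : Vtx N) : ℝ :=
  edgeProb N c u v / ∑ w : Vtx N, edgeProb N c u w

/-! For `x ≠ v` we have `ρ(x,v) ≤ N`, so `P(x,v) ≥ (c/N²)/Z`, where the normalising constant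
`Z = Σ_w p(x,w)` is at most `5c` because `Σ_w 1/ρ(x,w) ≤ 5N`. Hence
`P²(u,v) ≥ (1 - P(u,v))/(5N²)`. Since also `Z ≥ c/2` and `p ≤ c/N`, `P(u,v) ≤ 2/N`, and the claim
follows from `5 c^cr / 2 < 1 - 2/N` for large `N`. -/

open Finset

lemma ccr_pos : 0 < ccr := by
  have := Real.log_pos one_lt_two
  unfold ccr; positivity

lemma ccr_lt : ccr < 0.37 := by
  have := Real.log_two_gt_d9
  unfold ccr
  rw [div_lt_iff₀ (by linarith)]
  linarith

lemma mul_sum_sub_le_sum_mul {ι : Type*} [Fintype ι] [DecidableEq ι] {p q : ι → ℝ}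
    (hp : ∀ x, 0 ≤ p x) (hq : ∀ x, 0 ≤ q x) {v : ι} {δ : ℝ} (hδ : ∀ x ≠ v, δ ≤ q x) :
    δ * (∑ x, p x - p v) ≤ ∑ x, p x * q x :=
  calc δ * (∑ x, p x - p v) = ∑ x ∈ univ.erase v, p x * δ := by
        rw [← sum_mul, ← sum_erase_add _ _ (mem_univ v)]; ring
    _ ≤ ∑ x ∈ univ.erase v, p x * q x :=
        sum_le_sum fun x hx => mul_le_mul_of_nonneg_left (hδ x (ne_of_mem_erase hx)) (hp x)
    _ ≤ ∑ x, p x * q x :=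
        sum_le_sum_of_subset_of_nonneg (erase_subset _ _) fun x _ _ => mul_nonneg (hp x) (hq x)

lemma inv_cast_add_le (a b : ℕ) :
    ((a + b : ℕ) : ℝ)⁻¹ ≤ (if b ≤ a then (a : ℝ)⁻¹ else 0) + (if a < b then (b : ℝ)⁻¹ else 0) := by
  rcases le_or_gt b a with h | h
  · rw [if_pos h, if_neg h.not_gt, add_zero]
    rcases a.eq_zero_or_pos with rfl | ha
    · simp [Nat.le_zero.mp h]
    · exact inv_anti₀ (by norm_cast) (by norm_cast; omega)
  · rw [if_neg h.not_ge, if_pos h, zero_add]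
    exact inv_anti₀ (by norm_cast; omega) (by norm_cast; omega)

section LevelSets

variable {α : Type*} [Fintype α] {f : α → ℕ}

lemma card_le_mul_inv_le_three (hf : ∀ r, #{i | f i ≤ r} ≤ 2 * r + 1) (r : ℕ) :
    (#{i | f i ≤ r} : ℝ) * (r : ℝ)⁻¹ ≤ 3 := by
  rcases r.eq_zero_or_pos with rfl | hr
  · simp
  · rw [← div_eq_mul_inv, div_le_iff₀ (by positivity)]
    have : 2 * r + 1 ≤ 3 * r := by omega
    exact_mod_cast (hf r).trans this

lemma card_lt_mul_inv_le_two (hf : ∀ r, #{i | f i ≤ r} ≤ 2 * r + 1) (r : ℕ) :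
    (#{i | f i < r} : ℝ) * (r : ℝ)⁻¹ ≤ 2 := by
  rcases r.eq_zero_or_pos with rfl | hr
  · simp
  · rw [← div_eq_mul_inv, div_le_iff₀ (by positivity)]
    have : #{i | f i < r} ≤ 2 * r := by
      have := hf (r - 1)
      have hsub : #{i | f i < r} ≤ #{i | f i ≤ r - 1} :=
        card_le_card fun i => by simp only [mem_filter, mem_univ, true_and]; omega
      omega
    exact_mod_cast this

/-- Charge `(f i + f j)⁻¹` to the larger of `f i`, `f j`: the counting hypothesis bounds the
charges of each `i` by `3` when `f j ≤ f i` and by `2` when `f i < f j`. -/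
lemma sum_inv_cast_add_le (hf : ∀ r, #{i | f i ≤ r} ≤ 2 * r + 1) :
    ∑ i, ∑ j, ((f i + f j : ℕ) : ℝ)⁻¹ ≤ 5 * Fintype.card α := by
  have hsplit : ∑ i, ∑ j, ((f i + f j : ℕ) : ℝ)⁻¹ ≤
      ∑ i, (#{j | f j ≤ f i} : ℝ) * (f i : ℝ)⁻¹ + ∑ j, (#{i | f i < f j} : ℝ) * (f j : ℝ)⁻¹ := by
    simp only [card_eq_sum_ones, sum_filter, Nat.cast_sum, Nat.cast_ite,
      Nat.cast_one, Nat.cast_zero, sum_mul, ite_mul, one_mul, zero_mul]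
    rw [sum_comm (f := fun j i => if f i < f j then (f j : ℝ)⁻¹ else 0), ← sum_add_distrib]
    exact sum_le_sum fun i _ => by
      rw [← sum_add_distrib]; exact sum_le_sum fun j _ => inv_cast_add_le _ _
  calc _ ≤ ∑ _i : α, (3 : ℝ) + ∑ _j : α, (2 : ℝ) :=
        hsplit.trans (add_le_add (sum_le_sum fun i _ => card_le_mul_inv_le_three hf _)
          (sum_le_sum fun j _ => card_lt_mul_inv_le_two hf _))
    _ = 5 * Fintype.card α := by simp; ring

end LevelSets

section Torus

variable {N : ℕ} [NeZero N]

lemma rhoN_eq_zero_iff (i : ZMod N) : rhoN N i = 0 ↔ i = 0 := by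
  have := ZMod.val_lt i
  rw [← ZMod.val_eq_zero]
  unfold rhoN; split <;> omega

lemma two_mul_rhoN_le (i : ZMod N) : 2 * rhoN N i ≤ N := by
  have := ZMod.val_lt i
  unfold rhoN; split <;> omega

lemma card_rhoN_le (r : ℕ) : #{i : ZMod N | rhoN N i ≤ r} ≤ 2 * r + 1 :=
  calc #{i : ZMod N | rhoN N i ≤ r} ≤ #(range (r + 1) ∪ Ico (N - r) N) := by
        refine card_le_card_of_injOn ZMod.val (fun i hi => ?_) (ZMod.val_injective N).injOn
        have := ZMod.val_lt i
        rw [SetLike.mem_coe, mem_filter_univ, rhoN] at hi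
        simp only [coe_union, coe_range, coe_Ico, Set.mem_union, Set.mem_Iio, Set.mem_Ico]
        split at hi <;> omega
    _ ≤ 2 * r + 1 := (card_union_le _ _).trans (by simp; omega)

lemma torusDist_eq_zero_iff {u v : Vtx N} : torusDist N u v = 0 ↔ u = v := by
  simp [torusDist, rhoN_eq_zero_iff, sub_eq_zero, Prod.ext_iff]

lemma torusDist_le (u v : Vtx N) : torusDist N u v ≤ N := by
  have := two_mul_rhoN_le (u.1 - v.1)
  have := two_mul_rhoN_le (u.2 - v.2)
  unfold torusDist; omega

lemma sum_inv_torusDist_le (u : Vtx N) : ∑ v, (torusDist N u v : ℝ)⁻¹ ≤ 5 * N := by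
  have h := sum_inv_cast_add_le (card_rhoN_le (N := N))
  rw [ZMod.card, ← Fintype.sum_prod_type' (f := fun i j => ((rhoN N i + rhoN N j : ℕ) : ℝ)⁻¹),
    ← Equiv.sum_comp (Equiv.subLeft u)] at h
  simpa [torusDist] using h

end Torus

section Walk

variable {N : ℕ} {c : ℝ}

lemma edgeProb_nonneg (hc : 0 ≤ c) (u v : Vtx N) : 0 ≤ edgeProb N c u v := by
  unfold edgeProb; split <;> positivity

variable [NeZero N]

lemma edgeProb_le_mul_inv (u v : Vtx N) :
    edgeProb N c u v ≤ c / N * (torusDist N u v : ℝ)⁻¹ := by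
  unfold edgeProb
  split
  · simp_all [torusDist_eq_zero_iff.mpr rfl]
  · exact (min_le_left _ _).trans_eq (by rw [div_mul_eq_div_div, div_eq_mul_inv])

lemma edgeProb_le_div (hc : 0 ≤ c) (u v : Vtx N) : edgeProb N c u v ≤ c / N :=
  (edgeProb_le_mul_inv u v).trans <|
    mul_le_of_le_one_right (by positivity) (Nat.cast_inv_le_one _)

lemma div_sq_le_edgeProb (hc₀ : 0 ≤ c) (hc₁ : c ≤ 1) {u v : Vtx N} (h : u ≠ v) :
    c / N ^ 2 ≤ edgeProb N c u v := by
  have hN : (1 : ℝ) ≤ N := by exact_mod_cast NeZero.one_le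
  have hd : (1 : ℝ) ≤ torusDist N u v := by
    exact_mod_cast Nat.one_le_iff_ne_zero.mpr (torusDist_eq_zero_iff.not.mpr h)
  have hdN : (torusDist N u v : ℝ) ≤ N := by exact_mod_cast torusDist_le u v
  rw [edgeProb, if_neg h, sq]
  exact le_min (by gcongr) (div_le_one_of_le₀ (by nlinarith) (by positivity))

lemma sum_edgeProb_le (hc : 0 ≤ c) (u : Vtx N) : ∑ v, edgeProb N c u v ≤ 5 * c := by
  have hN : (0 : ℝ) < N := by exact_mod_cast NeZero.pos N
  calc ∑ v, edgeProb N c u v ≤ c / N * ∑ v, (torusDist N u v : ℝ)⁻¹ := by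
        rw [mul_sum]; exact sum_le_sum fun v _ => edgeProb_le_mul_inv u v
    _ ≤ c / N * (5 * N) := by gcongr; exact sum_inv_torusDist_le u
    _ = 5 * c := by field_simp

lemma div_two_le_sum_edgeProb (hN : 2 ≤ N) (hc₀ : 0 ≤ c) (hc₁ : c ≤ 1) (u : Vtx N) :
    c / 2 ≤ ∑ v, edgeProb N c u v := by
  have h := mul_sum_sub_le_sum_mul (p := fun _ => (1 : ℝ)) (fun _ => zero_le_one)
    (edgeProb_nonneg hc₀ u) (fun v hv => div_sq_le_edgeProb hc₀ hc₁ (Ne.symm hv))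
  simp only [sum_const, card_univ, Fintype.card_prod, ZMod.card, nsmul_eq_mul, mul_one,
    one_mul] at h
  have hN' : (2 : ℝ) ≤ N := by exact_mod_cast hN
  refine le_trans ?_ h
  rw [div_mul_eq_mul_div, le_div_iff₀ (by positivity)]
  push_cast
  nlinarith [mul_le_mul hN' hN' (by norm_num) (by positivity)]

lemma transP_nonneg (hc : 0 ≤ c) (x y : Vtx N) : 0 ≤ transP N c x y :=
  div_nonneg (edgeProb_nonneg hc x y) (sum_nonneg fun w _ => edgeProb_nonneg hc x w)

variable (hN : 2 ≤ N) (hc₀ : 0 < c) (hc₁ : c ≤ 1)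
include hN hc₀ hc₁

lemma sum_transP (u : Vtx N) : ∑ y, transP N c u y = 1 := by
  have := div_two_le_sum_edgeProb hN hc₀.le hc₁ u
  simp only [transP]
  rw [← sum_div, div_self (by linarith)]

lemma transP_le (u v : Vtx N) : transP N c u v ≤ 2 / N :=
  calc transP N c u v ≤ (c / N) / (c / 2) := by
        rw [transP]
        gcongr
        exacts [edgeProb_le_div hc₀.le u v, div_two_le_sum_edgeProb hN hc₀.le hc₁ u]
    _ = 2 / N := by field_simp

lemma inv_le_transP {x v : Vtx N} (h : x ≠ v) : (5 * (N : ℝ) ^ 2)⁻¹ ≤ transP N c x v :=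
  calc (5 * (N : ℝ) ^ 2)⁻¹ = (c / N ^ 2) / (5 * c) := by field_simp
    _ ≤ transP N c x v :=
        div_le_div₀ (edgeProb_nonneg hc₀.le x v) (div_sq_le_edgeProb hc₀.le hc₁ h)
          ((half_pos hc₀).trans_le (div_two_le_sum_edgeProb hN hc₀.le hc₁ x))
          (sum_edgeProb_le hc₀.le x)

end Walk

/-- At the critical value, for all large `N` and all vertices `u, v`,
`P²(u,v) = Σ_x P(u,x)·P(x,v) ≥ (c/2)·(1/N²)`. -/
theorem stmt9 :
    ∃ N₀ : ℕ, ∀ (N : ℕ) [NeZero N], N₀ ≤ N →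
      ∀ u v : Vtx N,
        ccr / 2 * (1 / (N : ℝ) ^ 2) ≤
          ∑ x : Vtx N, transP N ccr u x * transP N ccr x v := by
  refine ⟨100, fun N _ hN u v => ?_⟩
  have hN₂ : 2 ≤ N := by omega
  have hc := ccr_lt
  have hc₀ := ccr_pos
  have hc₁ : ccr ≤ 1 := by linarith
  have huv := transP_le hN₂ hc₀ hc₁ u v
  have h2N : 2 / (N : ℝ) ≤ 0.02 := by
    rw [div_le_iff₀ (by positivity)]; linarith [show (100 : ℝ) ≤ N by exact_mod_cast hN]
  calc ccr / 2 * (1 / (N : ℝ) ^ 2) = (5 * (N : ℝ) ^ 2)⁻¹ * (5 * ccr / 2) := by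
        field_simp
    _ ≤ (5 * (N : ℝ) ^ 2)⁻¹ * (1 - 2 / N) := by gcongr; linarith
    _ ≤ (5 * (N : ℝ) ^ 2)⁻¹ * (∑ x, transP N ccr u x - transP N ccr u v) := by
        rw [sum_transP hN₂ hc₀ hc₁]; gcongr
    _ ≤ ∑ x, transP N ccr u x * transP N ccr x v :=
        mul_sum_sub_le_sum_mul (transP_nonneg hc₀.le u) (transP_nonneg hc₀.le · v)
          fun x hx => inv_le_transP hN₂ hc₀ hc₁ hx
end

section
/- Let c = c^cr = 1/(4 log 2). There exist a constant C₀ > 0 and N₀ such that for every integer N ≥ N₀ and every vertex u ∈ V_N, |P²(u,u) − 4c²·(log N)/N²| ≤ C₀/N², where P²(u,u) = Σ_{x ∈ V_N} P(u,x)·P(x,u) = (1/Z_N²)·Σ_{x ≠ u} p(u,x)². -/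
open scoped BigOperators

/-!
For `c ≤ 1` the cap in `p` is never active, so `p(u,x) = c / (N ρ(u,x))` and `c` cancels:
`P²(u,u) = T₂ / T₁²` with `T_k = ∑_x ρ(0,x)⁻ᵏ`. Splitting the torus into the two axes and four
quadrants expresses `T_k` through the sums `∑_{a ≤ m, b ≤ k} (a + b)⁻ᵏ` with
`m, k ∈ {⌊N/2⌋, ⌊(N-1)/2⌋}`. For exponent 1 they have the closed form
`(m+k+1) H_{m+k} - (m+1) H_m - (k+1) H_k`, and `H_n = log n + γ + O(1/n)` gives
`T₁ = 4 N log 2 + O(log N)`; for exponent 2, telescoping gives `T₂ = 4 log N + O(1)`.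
As `c^cr = 1/(4 log 2)`, the main term `4 c² log N / N²` is `4 log N / (4 N log 2)²`, and the
errors contribute `O(1/N²)`.
-/

open Finset Real

lemma harmonic_nonneg (n : ℕ) : 0 ≤ harmonic n := by
  rw [harmonic_eq_sum_Icc]
  positivity

lemma sum_Icc_inv_add (a k : ℕ) :
    ∑ b ∈ Icc 1 k, ((a : ℝ) + b)⁻¹ = harmonic (a + k) - harmonic a := by
  induction k with
  | zero => simp
  | succ k ih =>
    rw [sum_Icc_succ_top (by omega), ih, ← add_assoc, harmonic_succ]
    push_cast
    ring

lemma sum_Icc_inv_add_sq_le {x : ℝ} (hx : 0 < x) (k : ℕ) :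
    ∑ b ∈ Icc 1 k, ((x + b) ^ 2)⁻¹ ≤ x⁻¹ - (x + k)⁻¹ := by
  induction k with
  | zero => simp
  | succ k ih =>
    rw [sum_Icc_succ_top (by omega)]
    have step : ((x + (k + 1 : ℕ)) ^ 2)⁻¹ ≤ (x + k)⁻¹ - (x + (k + 1 : ℕ))⁻¹ := by
      have htel : (x + k)⁻¹ - (x + k + 1)⁻¹ = ((x + k) * (x + k + 1))⁻¹ := by
        field_simp; ring
      push_cast
      rw [← add_assoc, htel]
      exact inv_anti₀ (by positivity) (by nlinarith)
    linarith

lemma inv_sub_inv_le_sum_Icc_inv_add_sq {x : ℝ} (hx : 0 ≤ x) (k : ℕ) :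
    (x + 1)⁻¹ - (x + k + 1)⁻¹ ≤ ∑ b ∈ Icc 1 k, ((x + b) ^ 2)⁻¹ := by
  induction k with
  | zero => simp
  | succ k ih =>
    rw [sum_Icc_succ_top (by omega)]
    have step : (x + k + 1)⁻¹ - (x + (k + 1 : ℕ) + 1)⁻¹ ≤ ((x + (k + 1 : ℕ)) ^ 2)⁻¹ := by
      have htel : (x + k + 1)⁻¹ - (x + k + 1 + 1)⁻¹ = ((x + k + 1) * (x + k + 1 + 1))⁻¹ := by
        field_simp; ring
      push_cast
      rw [← add_assoc, htel]
      exact inv_anti₀ (by positivity) (by nlinarith)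
    push_cast at step ⊢
    linarith

lemma harmonic_sub_log_mem_Icc {n : ℕ} (hn : n ≠ 0) :
    (harmonic n : ℝ) - log n ∈
      Set.Icc eulerMascheroniConstant (eulerMascheroniConstant + (n : ℝ)⁻¹) := by
  have hlow := eulerMascheroniConstant_lt_eulerMascheroniSeq' n
  have hup := eulerMascheroniSeq_lt_eulerMascheroniConstant n
  rw [eulerMascheroniSeq', if_neg hn] at hlow
  rw [eulerMascheroniSeq] at hup
  have hpos : (0 : ℝ) < n := by positivity
  have hlog : log (n + 1) ≤ log n + (n : ℝ)⁻¹ := by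
    have := log_le_sub_one_of_pos (show 0 < ((n : ℝ) + 1) / n by positivity)
    rw [log_div (by positivity) hpos.ne', add_div, div_self hpos.ne'] at this
    linarith [one_div (n : ℝ)]
  constructor <;> linarith

def quadrantSum (f : ℕ → ℝ) (m k : ℕ) : ℝ := ∑ a ∈ Icc 1 m, ∑ b ∈ Icc 1 k, f (a + b)

lemma quadrantSum_comm (f : ℕ → ℝ) (m k : ℕ) : quadrantSum f m k = quadrantSum f k m := by
  rw [quadrantSum, quadrantSum, sum_comm]
  simp_rw [add_comm]

lemma quadrantSum_succ_left (f : ℕ → ℝ) (m k : ℕ) :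
    quadrantSum f (m + 1) k = quadrantSum f m k + ∑ b ∈ Icc 1 k, f (m + 1 + b) :=
  sum_Icc_succ_top (by omega) _

lemma quadrantSum_inv_eq (m k : ℕ) :
    quadrantSum (fun n => (n : ℝ)⁻¹) m k =
      (m + k + 1) * harmonic (m + k) - (m + 1) * harmonic m - (k + 1) * harmonic k := by
  induction m with
  | zero => simp [quadrantSum]
  | succ m ih =>
    rw [quadrantSum_succ_left, ih]
    have hrow := sum_Icc_inv_add (m + 1) k
    push_cast at hrow ⊢
    rw [hrow, show m + 1 + k = m + k + 1 by omega, harmonic_succ, harmonic_succ]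
    push_cast
    field_simp
    ring

lemma quadrantSum_inv_mem_Icc_of_le_of_le_succ {m m' : ℕ} (h : m ≤ m') (h' : m' ≤ m + 1) (k : ℕ) :
    quadrantSum (fun n => (n : ℝ)⁻¹) m' k ∈
      Set.Icc (quadrantSum (fun n => (n : ℝ)⁻¹) m k)
        (quadrantSum (fun n => (n : ℝ)⁻¹) m k + harmonic k) := by
  obtain rfl | rfl : m' = m ∨ m' = m + 1 := by omega
  · exact ⟨le_rfl, le_add_of_nonneg_right (by exact_mod_cast harmonic_nonneg k)⟩
  rw [quadrantSum_succ_left]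
  have hrow : ∑ b ∈ Icc 1 k, ((m + 1 + b : ℕ) : ℝ)⁻¹ ≤ harmonic k := by
    rw [harmonic_eq_sum_Icc]
    push_cast
    gcongr with b hb
    · exact_mod_cast (mem_Icc.mp hb).1
    · linarith
  exact ⟨le_add_of_nonneg_right (sum_nonneg fun b _ => by positivity), by linarith⟩

lemma abs_quadrantSum_inv_self_sub_le {m : ℕ} (hm : m ≠ 0) :
    |quadrantSum (fun n => (n : ℝ)⁻¹) m m - 2 * m * log 2| ≤ log m + 5 := by
  have hm₁ : (1 : ℝ) ≤ m := by exact_mod_cast Nat.one_le_iff_ne_zero.mpr hm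
  have hscale {x e : ℝ} (hx : 0 < x) (he : e ≤ x⁻¹) : x * e ≤ 1 := by
    simpa [hx.ne'] using mul_le_mul_of_nonneg_left he hx.le
  obtain ⟨h₁, h₁'⟩ := harmonic_sub_log_mem_Icc hm
  obtain ⟨h₂, h₂'⟩ := harmonic_sub_log_mem_Icc (n := 2 * m) (by omega)
  push_cast at h₂ h₂'
  rw [log_mul two_ne_zero (by positivity)] at h₂ h₂'
  set γ := eulerMascheroniConstant
  set e₁ := (harmonic m : ℝ) - log m - γ
  set e₂ := (harmonic (2 * m) : ℝ) - (log 2 + log m) - γ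
  have he₁ : m * e₁ ≤ 1 := hscale (by positivity) (by linarith)
  have he₂ : 2 * m * e₂ ≤ 1 := hscale (by positivity) (by linarith)
  have hm₁e₁ : 0 ≤ m * e₁ := mul_nonneg (by positivity) (by linarith)
  have hm₂e₂ : 0 ≤ 2 * m * e₂ := mul_nonneg (by positivity) (by linarith)
  have hexpr : ((m : ℝ) + m + 1) * harmonic (m + m) - (m + 1) * harmonic m - (m + 1) * harmonic m
      - 2 * m * log 2 = -γ + log 2 - log m + (2 * m * e₂ + e₂) - (2 * (m * e₁) + 2 * e₁) := by
    simp only [e₁, e₂, two_mul]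
    ring
  have hinv₁ : (m : ℝ)⁻¹ ≤ 1 := inv_le_one_of_one_le₀ hm₁
  have hinv₂ : (2 * m : ℝ)⁻¹ ≤ 1 := inv_le_one_of_one_le₀ (by linarith)
  have hγ₀ : 0 < γ := one_half_lt_eulerMascheroniConstant.trans' (by norm_num)
  have hγ₁ : γ < 2 / 3 := eulerMascheroniConstant_lt_two_thirds
  have hlog2 : log 2 < 1 := by linarith [log_two_lt_d9]
  have hlog2₀ : 0 < log 2 := log_pos one_lt_two
  have hlogm : 0 ≤ log m := log_nonneg hm₁
  rw [quadrantSum_inv_eq, hexpr, abs_le]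
  constructor <;> linarith

lemma quadrantSum_inv_sq_le (m k : ℕ) :
    quadrantSum (fun n => ((n : ℝ) ^ 2)⁻¹) m k ≤ 1 + log m := by
  refine le_trans ?_ (harmonic_le_one_add_log m)
  rw [harmonic_eq_sum_Icc, quadrantSum]
  push_cast
  gcongr with a ha
  have ha' : (0 : ℝ) < a := by exact_mod_cast (mem_Icc.mp ha).1
  linarith [sum_Icc_inv_add_sq_le ha' k, inv_pos.mpr (add_pos_of_pos_of_nonneg ha' k.cast_nonneg)]

lemma log_sub_two_le_quadrantSum_inv_sq {m k : ℕ} (hmk : m ≤ k + 2) :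
    log (m + 2) - 2 ≤ quadrantSum (fun n => ((n : ℝ) ^ 2)⁻¹) m k := by
  have hrows : ∑ a ∈ Icc 1 m, (((a : ℝ) + 1)⁻¹ - ((a : ℝ) + k + 1)⁻¹) ≤
      quadrantSum (fun n => ((n : ℝ) ^ 2)⁻¹) m k := by
    rw [quadrantSum]
    push_cast
    exact sum_le_sum fun a _ => inv_sub_inv_le_sum_Icc_inv_add_sq a.cast_nonneg k
  have hfirst : ∑ a ∈ Icc 1 m, ((a : ℝ) + 1)⁻¹ = harmonic (m + 1) - 1 := by
    have := sum_Icc_inv_add 1 m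
    rw [add_comm 1 m, show harmonic 1 = 1 by simp [harmonic]] at this
    push_cast at this
    simp_rw [add_comm _ (1 : ℝ)]
    exact this
  have hsecond : ∑ a ∈ Icc 1 m, ((a : ℝ) + k + 1)⁻¹ ≤ 1 := by
    calc ∑ a ∈ Icc 1 m, ((a : ℝ) + k + 1)⁻¹ ≤ ∑ _a ∈ Icc 1 m, ((k : ℝ) + 2)⁻¹ := by
          refine sum_le_sum fun a ha => inv_anti₀ (by positivity) ?_
          have : (1 : ℝ) ≤ a := by exact_mod_cast (mem_Icc.mp ha).1
          linarith
      _ = m / ((k : ℝ) + 2) := by simp [div_eq_mul_inv]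
      _ ≤ 1 := div_le_one_of_le₀ (by exact_mod_cast hmk) (by positivity)
  have hlog := log_add_one_le_harmonic (m + 1)
  rw [Nat.cast_add_one, Nat.cast_add_one, add_assoc, one_add_one_eq_two] at hlog
  rw [sum_sub_distrib] at hrows
  linarith

lemma sum_Icc_inv_sq_le_two (m : ℕ) : ∑ r ∈ Icc 1 m, ((r : ℝ) ^ 2)⁻¹ ≤ 2 := by
  have h := sum_Ioo_inv_sq_le (α := ℝ) 0 (m + 1)
  rw [show Ioo 0 (m + 1) = Icc 1 m by ext; simp; omega] at h
  simpa using h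

lemma abs_quadrantSum_inv_sq_sub_log_le {m k n : ℕ} (hm₀ : 0 < m) (hm : m ≤ n)
    (hn : n ≤ 2 * m + 2) (hmk : m ≤ k + 2) :
    |quadrantSum (fun n => ((n : ℝ) ^ 2)⁻¹) m k - log n| ≤ 3 := by
  have hn₀ : 0 < n := hm₀.trans_le hm
  have hup : log m ≤ log n := log_le_log (by positivity) (by exact_mod_cast hm)
  have hlow : log n - log 2 ≤ log (m + 2) := by
    rw [← log_div (by positivity) two_ne_zero]
    refine log_le_log (by positivity) ?_
    rw [div_le_iff₀ two_pos]
    exact_mod_cast (by omega : n ≤ (m + 2) * 2)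
  have hlog2 : log 2 < 1 := by linarith [log_two_lt_d9]
  have hQup := quadrantSum_inv_sq_le m k
  have hQlow := log_sub_two_le_quadrantSum_inv_sq hmk
  rw [abs_le]
  constructor <;> linarith

section Torus

variable {N : ℕ}

lemma rhoN_eq_min [NeZero N] (i : ZMod N) : rhoN N i = min i.val (N - i.val) := by
  have := ZMod.val_lt i
  unfold rhoN
  split_ifs <;> omega

lemma rhoN_neg [NeZero N] (i : ZMod N) : rhoN N (-i) = rhoN N i := by
  rw [rhoN_eq_min, rhoN_eq_min, ZMod.neg_val]
  split_ifs with h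
  · simp [h]
  · have := ZMod.val_lt i
    omega

lemma torusDist_comm [NeZero N] (u v : Vtx N) : torusDist N u v = torusDist N v u := by
  rw [torusDist, torusDist, ← rhoN_neg (u.1 - v.1), ← rhoN_neg (u.2 - v.2), neg_sub, neg_sub]

lemma torusDist_add_left (u x : Vtx N) : torusDist N u (u + x) = torusDist N 0 x := by
  simp [torusDist]

-- Also on the diagonal, where both sides vanish because `c / 0 = 0`.
lemma edgeProb_eq_div {c : ℝ} (hc : c ≤ 1) (u v : Vtx N) :
    edgeProb N c u v = c / (N * torusDist N u v) := by
  unfold edgeProb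
  split_ifs with h
  · simp [h, torusDist, rhoN]
  · refine min_eq_left ?_
    rcases Nat.eq_zero_or_pos (N * torusDist N u v) with h0 | hpos
    · have : (N : ℝ) * torusDist N u v = 0 := by exact_mod_cast h0
      simp [this]
    · have : (1 : ℝ) ≤ N * torusDist N u v := by exact_mod_cast hpos
      exact div_le_one_of_le₀ (by linarith) (by linarith)

lemma sum_torusDist_eq [NeZero N] (g : ℕ → ℝ) (u : Vtx N) :
    ∑ v, g (torusDist N u v) = ∑ x, g (torusDist N 0 x) :=
  (Fintype.sum_equiv (Equiv.addLeft u) _ _ fun x => by simp [torusDist_add_left]).symm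

lemma sum_rhoN [NeZero N] (g : ℕ → ℝ) :
    ∑ a : ZMod N, g (rhoN N a) =
      g 0 + ∑ r ∈ Icc 1 (N / 2), g r + ∑ r ∈ Icc 1 ((N - 1) / 2), g r := by
  have hN := Nat.pos_of_ne_zero (NeZero.ne N)
  have hval : ∑ a : ZMod N, g (rhoN N a) = ∑ i ∈ range N, g (min i (N - i)) := by
    refine sum_nbij' ZMod.val (fun i => (i : ZMod N)) (fun a _ => mem_range.mpr (ZMod.val_lt a))
      (fun _ _ => mem_univ _) (fun a _ => ZMod.natCast_zmod_val a)
      (fun i hi => ZMod.val_cast_of_lt (mem_range.mp hi)) (fun a _ => by rw [rhoN_eq_min])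
  rw [hval, sum_range_eq_add_Ico _ hN,
    ← sum_Ico_consecutive _ (by omega : 1 ≤ N / 2 + 1) (by omega), add_assoc]
  have hlow : ∑ i ∈ Ico 1 (N / 2 + 1), g (min i (N - i)) = ∑ r ∈ Icc 1 (N / 2), g r :=
    sum_congr rfl fun i hi => by rw [min_eq_left (by simp at hi; omega)]
  have hhigh : ∑ i ∈ Ico (N / 2 + 1) N, g (min i (N - i)) = ∑ r ∈ Icc 1 ((N - 1) / 2), g r := by
    refine sum_nbij' (N - ·) (N - ·) ?_ ?_ ?_ ?_ ?_ <;> intro i hi <;> simp at hi ⊢ <;> try omega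
    rw [min_eq_right (by omega)]
  rw [hlow, hhigh]
  simp

lemma sum_torusDist_zero [NeZero N] (g : ℕ → ℝ) :
    ∑ x : Vtx N, g (torusDist N 0 x) =
      g 0 + 2 * ∑ r ∈ Icc 1 (N / 2), g r + 2 * ∑ r ∈ Icc 1 ((N - 1) / 2), g r
        + quadrantSum g (N / 2) (N / 2) + quadrantSum g (N / 2) ((N - 1) / 2)
        + quadrantSum g ((N - 1) / 2) (N / 2) + quadrantSum g ((N - 1) / 2) ((N - 1) / 2) := by
  have hsplit : ∑ x : Vtx N, g (torusDist N 0 x) =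
      ∑ a : ZMod N, ∑ b : ZMod N, g (rhoN N a + rhoN N b) := by
    rw [Fintype.sum_prod_type]
    simp [torusDist, rhoN_neg]
  have hinner (r : ℕ) : ∑ b : ZMod N, g (r + rhoN N b) =
      g r + ∑ s ∈ Icc 1 (N / 2), g (r + s) + ∑ s ∈ Icc 1 ((N - 1) / 2), g (r + s) := by
    simpa using sum_rhoN (fun s => g (r + s))
  rw [hsplit, sum_congr rfl fun a _ => hinner (rhoN N a),
    sum_rhoN (fun r => g r + ∑ s ∈ Icc 1 (N / 2), g (r + s) + ∑ s ∈ Icc 1 ((N - 1) / 2), g (r + s))]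
  simp only [sum_add_distrib, zero_add, quadrantSum]
  ring

end Torus

lemma one_le_log_of_three_le {N : ℕ} (hN : 3 ≤ N) : 1 ≤ log N := by
  rw [le_log_iff_exp_le (by positivity)]
  have : (3 : ℝ) ≤ N := by exact_mod_cast hN
  linarith [exp_one_lt_d9]

-- The vertex `x = 0` contributes `0⁻¹ = 0`.
noncomputable def torusInvPowSum (N k : ℕ) [NeZero N] : ℝ :=
  ∑ x : Vtx N, ((torusDist N 0 x : ℝ) ^ k)⁻¹

section InvPowSum

variable {N : ℕ} [NeZero N]

lemma torusInvPowSum_one_eq :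
    torusInvPowSum N 1 = 2 * harmonic (N / 2) + 2 * harmonic ((N - 1) / 2)
      + quadrantSum (fun n => (n : ℝ)⁻¹) (N / 2) (N / 2)
      + quadrantSum (fun n => (n : ℝ)⁻¹) (N / 2) ((N - 1) / 2)
      + quadrantSum (fun n => (n : ℝ)⁻¹) ((N - 1) / 2) (N / 2)
      + quadrantSum (fun n => (n : ℝ)⁻¹) ((N - 1) / 2) ((N - 1) / 2) := by
  rw [torusInvPowSum, sum_torusDist_zero (fun n => ((n : ℝ) ^ 1)⁻¹)]
  simp [harmonic_eq_sum_Icc]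

lemma torusInvPowSum_two_eq :
    torusInvPowSum N 2 = 2 * ∑ r ∈ Icc 1 (N / 2), ((r : ℝ) ^ 2)⁻¹
      + 2 * ∑ r ∈ Icc 1 ((N - 1) / 2), ((r : ℝ) ^ 2)⁻¹
      + quadrantSum (fun n => ((n : ℝ) ^ 2)⁻¹) (N / 2) (N / 2)
      + quadrantSum (fun n => ((n : ℝ) ^ 2)⁻¹) (N / 2) ((N - 1) / 2)
      + quadrantSum (fun n => ((n : ℝ) ^ 2)⁻¹) ((N - 1) / 2) (N / 2)
      + quadrantSum (fun n => ((n : ℝ) ^ 2)⁻¹) ((N - 1) / 2) ((N - 1) / 2) := by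
  rw [torusInvPowSum, sum_torusDist_zero (fun n => ((n : ℝ) ^ 2)⁻¹)]
  simp

lemma abs_torusInvPowSum_one_sub_le (hN : 3 ≤ N) :
    |torusInvPowSum N 1 - 4 * N * log 2| ≤ 35 * log N := by
  rw [torusInvPowSum_one_eq]
  set M := N / 2
  set K := (N - 1) / 2
  have hM : M ≠ 0 := by omega
  have hK : K ≠ 0 := by omega
  have hKM := quadrantSum_inv_mem_Icc_of_le_of_le_succ (m := K) (m' := M) (by omega) (by omega) M
  have hKK := quadrantSum_inv_mem_Icc_of_le_of_le_succ (m := K) (m' := M) (by omega) (by omega) K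
  have hdiag := abs_le.mp (abs_quadrantSum_inv_self_sub_le hM)
  have hsymm := quadrantSum_comm (fun n => (n : ℝ)⁻¹) M K
  have hL := one_le_log_of_three_le hN
  have hlogM : log M ≤ log N := log_le_log (by positivity) (by exact_mod_cast Nat.div_le_self N 2)
  have hlogK : log K ≤ log N := log_le_log (by positivity) (by exact_mod_cast (by omega : K ≤ N))
  have hHM := harmonic_le_one_add_log M
  have hHK := harmonic_le_one_add_log K
  have h2M : ((2 * M : ℕ) : ℝ) ≤ N := by exact_mod_cast (by omega : 2 * M ≤ N)
  have h2M' : (N : ℝ) ≤ ((2 * M + 1 : ℕ) : ℝ) := by exact_mod_cast (by omega : N ≤ 2 * M + 1)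
  push_cast at h2M h2M'
  have hlog2 : log 2 < 1 := by linarith [log_two_lt_d9]
  have hlog2₀ : 0 < log 2 := log_pos one_lt_two
  have hround₀ := mul_le_mul_of_nonneg_right h2M hlog2₀.le
  have hround₁ := mul_le_mul_of_nonneg_right h2M' hlog2₀.le
  -- all four quadrant sums lie within `2 H_M` of the diagonal one
  rw [abs_le]
  constructor <;> linarith [hKM.1, hKM.2, hKK.1, hKK.2]

lemma abs_torusInvPowSum_two_sub_le (hN : 3 ≤ N) :
    |torusInvPowSum N 2 - 4 * log N| ≤ 20 := by
  rw [torusInvPowSum_two_eq]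
  have hQ {m k : ℕ} (hm₀ : 0 < m) (hm : m ≤ N) (hn : N ≤ 2 * m + 2) (hmk : m ≤ k + 2) :=
    abs_le.mp (abs_quadrantSum_inv_sq_sub_log_le hm₀ hm hn hmk)
  have h₁ := hQ (m := N / 2) (k := N / 2) (by omega) (by omega) (by omega) (by omega)
  have h₂ := hQ (m := N / 2) (k := (N - 1) / 2) (by omega) (by omega) (by omega) (by omega)
  have h₃ := hQ (m := (N - 1) / 2) (k := N / 2) (by omega) (by omega) (by omega) (by omega)
  have h₄ := hQ (m := (N - 1) / 2) (k := (N - 1) / 2) (by omega) (by omega) (by omega) (by omega)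
  have hP₁ := sum_Icc_inv_sq_le_two (N / 2)
  have hP₂ := sum_Icc_inv_sq_le_two ((N - 1) / 2)
  have hP₁₀ : 0 ≤ ∑ r ∈ Icc 1 (N / 2), ((r : ℝ) ^ 2)⁻¹ := sum_nonneg fun _ _ => by positivity
  have hP₂₀ : 0 ≤ ∑ r ∈ Icc 1 ((N - 1) / 2), ((r : ℝ) ^ 2)⁻¹ := sum_nonneg fun _ _ => by positivity
  rw [abs_le]
  constructor <;> linarith

end InvPowSum

lemma sum_transP_mul_transP {N : ℕ} [NeZero N] {c : ℝ} (hc₀ : c ≠ 0) (hc₁ : c ≤ 1) (u : Vtx N) :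
    ∑ x, transP N c u x * transP N c x u = torusInvPowSum N 2 / torusInvPowSum N 1 ^ 2 := by
  have hp (v w : Vtx N) : edgeProb N c v w = c / N * ((torusDist N v w : ℝ) ^ 1)⁻¹ := by
    rw [edgeProb_eq_div hc₁, pow_one, ← div_div, div_eq_mul_inv]
  have hZ (v : Vtx N) : ∑ w, edgeProb N c v w = c / N * torusInvPowSum N 1 := by
    simp_rw [hp, ← mul_sum]
    rw [sum_torusDist_eq (fun n => ((n : ℝ) ^ 1)⁻¹) v, torusInvPowSum]
  have hterm (x : Vtx N) : transP N c u x * transP N c x u =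
      (c / N) ^ 2 * ((torusDist N u x : ℝ) ^ 2)⁻¹ / (c / N * torusInvPowSum N 1) ^ 2 := by
    rw [transP, transP, hZ, hZ, hp u x, hp x u, torusDist_comm x u]
    ring
  rw [sum_congr rfl fun x _ => hterm x, ← sum_div, ← mul_sum,
    sum_torusDist_eq (fun n => ((n : ℝ) ^ 2)⁻¹) u, ← torusInvPowSum, mul_pow,
    mul_div_mul_left _ _ (by simp [hc₀, NeZero.ne N])]

lemma abs_div_sq_sub_div_sq_le {S T A B E F : ℝ} (hA : 0 < A) (hB : 0 ≤ B) (hS : |S - A| ≤ E)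
    (hE : E ≤ A / 2) (hT : |T - B| ≤ F) :
    |T / S ^ 2 - B / A ^ 2| ≤ 4 * F / A ^ 2 + 10 * B * E / A ^ 3 := by
  obtain ⟨hS₁, hS₂⟩ := abs_le.mp hS
  have hS₀ : 0 < S := by linarith
  have hE₀ : 0 ≤ E := (abs_nonneg _).trans hS
  have hsplit : T / S ^ 2 - B / A ^ 2 =
      (T - B) / S ^ 2 + B * ((A - S) * (A + S)) / (S ^ 2 * A ^ 2) := by
    field_simp
    ring
  rw [hsplit]
  refine (abs_add_le _ _).trans (add_le_add ?_ ?_)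
  · rw [abs_div, abs_of_pos (by positivity : 0 < S ^ 2)]
    calc |T - B| / S ^ 2 ≤ F / (A / 2) ^ 2 := by
          gcongr
          · exact (abs_nonneg _).trans hT
          · linarith
      _ = 4 * F / A ^ 2 := by ring
  · rw [abs_div, abs_mul, abs_mul, abs_of_nonneg hB, abs_of_pos (by positivity : 0 < S ^ 2 * A ^ 2),
      abs_sub_comm, abs_of_pos (by linarith : 0 < A + S)]
    calc B * (|S - A| * (A + S)) / (S ^ 2 * A ^ 2)
        ≤ B * (E * (5 / 2 * A)) / ((A / 2) ^ 2 * A ^ 2) := by gcongr <;> linarith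
      _ = 10 * B * E / A ^ 3 := by
          field_simp
          ring

lemma log_sq_le_four_mul {x : ℝ} (hx : 1 ≤ x) : log x ^ 2 ≤ 4 * x := by
  have h := log_le_rpow_div (by linarith : 0 ≤ x) (by norm_num : (0 : ℝ) < 1 / 2)
  rw [← sqrt_eq_rpow, div_div_eq_mul_div, div_one] at h
  have hlog := log_nonneg hx
  calc log x ^ 2 ≤ (sqrt x * 2) ^ 2 := by gcongr
    _ = 4 * x := by rw [mul_pow, sq_sqrt (by linarith)]; ring

lemma abs_torusInvPowSum_two_div_sq_sub_le {N : ℕ} [NeZero N] (hN : 10000 ≤ N) :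
    |torusInvPowSum N 2 / torusInvPowSum N 1 ^ 2 - 4 * log N / (4 * N * log 2) ^ 2| ≤
      300 / (N : ℝ) ^ 2 := by
  have hNR : (10000 : ℝ) ≤ N := by exact_mod_cast hN
  have hN₀ : (0 : ℝ) < N := by linarith
  have hL := log_sq_le_four_mul (by linarith : (1 : ℝ) ≤ N)
  have hlog2 : 0.69 < log 2 := by linarith [log_two_gt_d9]
  have hl2 : 0.47 < log 2 ^ 2 := by nlinarith
  have hl3 : 0.32 < log 2 ^ 3 := by nlinarith
  refine (abs_div_sq_sub_div_sq_le (by positivity) (by positivity)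
    (abs_torusInvPowSum_one_sub_le (by omega)) ?_
    (abs_torusInvPowSum_two_sub_le (by omega))).trans ?_
  · refine (pow_le_pow_iff_left₀ (by positivity) (by positivity) two_ne_zero).mp ?_
    nlinarith [mul_le_mul_of_nonneg_left hl2.le (sq_nonneg (N : ℝ)),
      mul_le_mul_of_nonneg_right hNR hN₀.le]
  · have ht₁ : 4 * 20 / (4 * N * log 2) ^ 2 ≤ 20 / N ^ 2 := by
      rw [div_le_div_iff₀ (by positivity) (by positivity)]
      nlinarith [mul_le_mul_of_nonneg_left hl2.le (sq_nonneg (N : ℝ))]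
    have ht₂ : 10 * (4 * log N) * (35 * log N) / (4 * N * log 2) ^ 3 ≤ 280 / N ^ 2 := by
      rw [div_le_div_iff₀ (by positivity) (by positivity)]
      nlinarith [mul_le_mul_of_nonneg_right hL (sq_nonneg (N : ℝ)), pow_pos hN₀ 3]
    calc _ ≤ 20 / (N : ℝ) ^ 2 + 280 / N ^ 2 := add_le_add ht₁ ht₂
      _ = 300 / N ^ 2 := by rw [← add_div]; norm_num

/-- At criticality there are `C₀ > 0` and `N₀` such that for all `N ≥ N₀` and every
vertex `u`, `|P²(u,u) − 4c²·(log N)/N²| ≤ C₀/N²`, where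
`P²(u,u) = Σ_x P(u,x)·P(x,u)`. -/
theorem stmt12 :
    ∃ C₀ : ℝ, 0 < C₀ ∧ ∃ N₀ : ℕ, ∀ (N : ℕ) [NeZero N], N₀ ≤ N →
      ∀ u : Vtx N,
        |(∑ x : Vtx N, transP N ccr u x * transP N ccr x u) -
            4 * ccr ^ 2 * Real.log N / (N : ℝ) ^ 2| ≤ C₀ / (N : ℝ) ^ 2 := by
  refine ⟨300, by norm_num, 10000, fun N _ hN u => ?_⟩
  have hccr₀ : ccr ≠ 0 := by unfold ccr; positivity
  have hccr₁ : ccr ≤ 1 := by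
    unfold ccr
    rw [div_le_one (by positivity)]
    linarith [log_two_gt_d9]
  have hccr : 4 * ccr ^ 2 * log N / N ^ 2 = 4 * log N / (4 * N * log 2) ^ 2 := by
    unfold ccr
    field_simp
  rw [sum_transP_mul_transP hccr₀ hccr₁, hccr]
  exact abs_torusInvPowSum_two_div_sq_sub_le hN
end
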